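/- arXiv:1105.0621 — 3 statements merged into one kernel-verified Lean document; each statement's English description precedes it below -/
import Mathlib

section
/- Let a and b be distinct positive real numbers, and let k be a real number with 0 < k ≤ 1/2. Then A_k(a,b) < I(a,b), where A_k is the power mean of order k and I is the identric mean. -/
/-!
Power means increase with their order, so it suffices to treat `k = 1/2`. Writing `a = s²`,
`b = t²`, the claim `((s + t)/2)² < I(s², t²)` becomes, after taking logarithms,
`(t² - s²) log ((s + t)/2) < t² log t - s² log s - (t² - s²)/2`. Both sides agree at `t = s`,
and in `t` the right side minus the left side has derivative `2t log (2t/(s + t)) - (t - s)`,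
which is positive by `log u > 1 - 1/u`.
-/

open Real Set

noncomputable def powerMean (k a b : ℝ) : ℝ := ((a ^ k + b ^ k) / 2) ^ (1 / k)

noncomputable def identricMean (x y : ℝ) : ℝ := 1 / exp 1 * (y ^ y / x ^ x) ^ (1 / (y - x))

theorem powerMean_comm (k a b : ℝ) : powerMean k a b = powerMean k b a := by
  rw [powerMean, powerMean, add_comm]

theorem powerMean_le_powerMean {p q a b : ℝ} (ha : 0 ≤ a) (hb : 0 ≤ b) (hp : 0 < p)
    (hpq : p ≤ q) : powerMean p a b ≤ powerMean q a b := by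
  have hq : 0 < q := hp.trans_le hpq
  have hm : 0 ≤ (a ^ p + b ^ p) / 2 := by positivity
  have hjensen : ((a ^ p + b ^ p) / 2) ^ (q / p) ≤ (a ^ q + b ^ q) / 2 := by
    have h := (convexOn_rpow ((one_le_div hp).2 hpq)).2 (rpow_nonneg ha p) (rpow_nonneg hb p)
      (by norm_num : (0 : ℝ) ≤ 1 / 2) (by norm_num : (0 : ℝ) ≤ 1 / 2) (by norm_num)
    simp only [smul_eq_mul, ← rpow_mul ha, ← rpow_mul hb, mul_div_cancel₀ _ hp.ne'] at h
    calc ((a ^ p + b ^ p) / 2) ^ (q / p) = (1 / 2 * a ^ p + 1 / 2 * b ^ p) ^ (q / p) := by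
          congr 1
          ring
      _ ≤ 1 / 2 * a ^ q + 1 / 2 * b ^ q := h
      _ = (a ^ q + b ^ q) / 2 := by ring
  calc powerMean p a b = (((a ^ p + b ^ p) / 2) ^ (q / p)) ^ (1 / q) := by
        rw [powerMean, ← rpow_mul hm]
        congr 1
        field_simp
    _ ≤ powerMean q a b := rpow_le_rpow (rpow_nonneg hm _) hjensen (by positivity)

theorem powerMean_half (a b : ℝ) :
    powerMean (1 / 2) a b = ((√a + √b) / 2) ^ 2 := by
  rw [powerMean, sqrt_eq_rpow, sqrt_eq_rpow, one_div_one_div, ← rpow_natCast]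
  norm_num

theorem identricMean_comm {x y : ℝ} (hx : 0 ≤ x) (hy : 0 ≤ y) :
    identricMean x y = identricMean y x := by
  have hq : 0 ≤ y ^ y / x ^ x := div_nonneg (rpow_nonneg hy y) (rpow_nonneg hx x)
  rw [identricMean, identricMean, ← inv_div (y ^ y), inv_rpow hq, ← rpow_neg hq,
    ← one_div_neg_eq_neg_one_div, neg_sub]

theorem identricMean_pos {x y : ℝ} (hx : 0 < x) (hy : 0 < y) : 0 < identricMean x y := by
  unfold identricMean
  positivity

theorem log_identricMean {x y : ℝ} (hx : 0 < x) (hy : 0 < y) :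
    log (identricMean x y) = (y * log y - x * log x) / (y - x) - 1 := by
  have hq : 0 < y ^ y / x ^ x := by positivity
  rw [identricMean, log_mul (by positivity) (rpow_pos_of_pos hq _).ne', log_rpow hq,
    log_div (rpow_pos_of_pos hy y).ne' (rpow_pos_of_pos hx x).ne', log_rpow hy, log_rpow hx,
    one_div, log_inv, log_exp]
  ring

theorem strictMonoOn_mul_log_sub_mul_log_midpoint {s : ℝ} (hs : 0 < s) :
    StrictMonoOn
      (fun x ↦ x ^ 2 * log x - (x ^ 2 - s ^ 2) / 2 - (x ^ 2 - s ^ 2) * log ((s + x) / 2))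
      (Ici s) := by
  have hderiv : ∀ x, s ≤ x → HasDerivAt
      (fun x ↦ x ^ 2 * log x - (x ^ 2 - s ^ 2) / 2 - (x ^ 2 - s ^ 2) * log ((s + x) / 2))
      (2 * x * (log x - log ((s + x) / 2)) - (x - s)) x := by
    intro x hx
    have hx0 : 0 < x := hs.trans_le hx
    have hm : HasDerivAt (fun x ↦ log ((s + x) / 2)) (1 / (s + x)) x := by
      have hi : HasDerivAt (fun x ↦ (s + x) / 2) (1 / 2) x := by
        simpa using ((hasDerivAt_id x).const_add s).div_const 2
      convert hi.log (by positivity) using 1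
      field_simp
    refine ((((hasDerivAt_pow 2 x).mul (hasDerivAt_log hx0.ne')).sub
      (((hasDerivAt_pow 2 x).sub_const (s ^ 2)).div_const 2)).sub
      (((hasDerivAt_pow 2 x).sub_const (s ^ 2)).mul hm)).congr_deriv ?_
    field_simp
    ring
  refine strictMonoOn_of_hasDerivWithinAt_pos (convex_Ici s)
    (fun x hx ↦ (hderiv x hx).continuousAt.continuousWithinAt)
    (fun x hx ↦ (hderiv x (interior_subset hx)).hasDerivWithinAt) ?_
  rw [interior_Ici]
  intro x (hx : s < x)
  have hx0 : 0 < x := hs.trans hx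
  have hlog := log_lt_sub_one_of_pos (show 0 < (s + x) / 2 / x by positivity)
    (ne_of_lt ((div_lt_one hx0).2 (by linarith)))
  rw [log_div (by positivity) hx0.ne', show (s + x) / 2 / x - 1 = (s - x) / (2 * x) by
    field_simp; ring, lt_div_iff₀ (by positivity)] at hlog
  linarith

theorem sub_mul_log_midpoint_lt {s t : ℝ} (hs : 0 < s) (hst : s < t) :
    (t ^ 2 - s ^ 2) * log ((s + t) / 2) < t ^ 2 * log t - s ^ 2 * log s - (t ^ 2 - s ^ 2) / 2 := by
  have h := strictMonoOn_mul_log_sub_mul_log_midpoint hs self_mem_Ici hst.le hst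
  simp only [sub_self, zero_div, zero_mul, sub_zero] at h
  linarith

theorem sq_midpoint_lt_identricMean_sq {s t : ℝ} (hs : 0 < s) (hst : s < t) :
    ((s + t) / 2) ^ 2 < identricMean (s ^ 2) (t ^ 2) := by
  have ht : 0 < t := hs.trans hst
  rw [← log_lt_log_iff (by positivity) (identricMean_pos (by positivity) (by positivity)),
    log_identricMean (by positivity) (by positivity), log_pow, log_pow, log_pow, lt_sub_iff_add_lt,
    lt_div_iff₀ (by nlinarith)]
  push_cast
  linarith [sub_mul_log_midpoint_lt hs hst]

theorem powerMean_half_lt_identricMean {a b : ℝ} (ha : 0 < a) (hb : 0 < b) (hab : a ≠ b) :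
    powerMean (1 / 2) a b < identricMean a b := by
  wlog hlt : a < b generalizing a b
  · rw [powerMean_comm, identricMean_comm ha.le hb.le]
    exact this hb ha hab.symm (hab.lt_or_gt.resolve_left hlt)
  have h := sq_midpoint_lt_identricMean_sq (sqrt_pos.2 ha) (sqrt_lt_sqrt ha.le hlt)
  rwa [sq_sqrt ha.le, sq_sqrt hb.le, ← powerMean_half] at h

theorem power_mean_lt_identric (a b : ℝ) (ha : 0 < a) (hb : 0 < b) (hab : a ≠ b)
    (k : ℝ) (hk : 0 < k) (hk2 : k ≤ 1 / 2) :
    ((a ^ k + b ^ k) / 2) ^ (1 / k) <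
      (1 / Real.exp 1) * (b ^ b / a ^ a) ^ (1 / (b - a)) :=
  calc powerMean k a b ≤ powerMean (1 / 2) a b := powerMean_le_powerMean ha.le hb.le hk hk2
    _ < identricMean a b := powerMean_half_lt_identricMean ha hb hab
end

section
/- Let a and b be distinct positive real numbers. Then A_{2/3}(a,b) < (3/(2√2)) · He(a,b), where A_{2/3} is the power mean of order 2/3 and He is the Heronian mean. -/
/-!
Write `a = x⁶`, `b = y⁶`. Squaring both sides, the inequality becomes
`(x⁴ + y⁴)³ < (x⁶ + x³y³ + y⁶)²`, whose difference is `(xy)³ (2σ - 3π)(σ² - 3π²)` with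
`σ = x² + y²`, `π = xy`; both factors are positive since `σ ≥ 2π > 0`.
-/

lemma cube_add_pow_four_lt_sq (x y : ℝ) (hxy : 0 < x * y) :
    (x ^ 4 + y ^ 4) ^ 3 < (x ^ 6 + x ^ 3 * y ^ 3 + y ^ 6) ^ 2 := by
  have hσ : 2 * (x * y) ≤ x ^ 2 + y ^ 2 := by nlinarith [sq_nonneg (x - y)]
  have h₁ : 0 < 2 * (x ^ 2 + y ^ 2) - 3 * (x * y) := by linarith
  have h₂ : 0 < (x ^ 2 + y ^ 2) ^ 2 - 3 * (x * y) ^ 2 := by nlinarith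
  rw [← sub_pos, show (x ^ 6 + x ^ 3 * y ^ 3 + y ^ 6) ^ 2 - (x ^ 4 + y ^ 4) ^ 3 =
    (x * y) ^ 3 * (2 * (x ^ 2 + y ^ 2) - 3 * (x * y)) *
      ((x ^ 2 + y ^ 2) ^ 2 - 3 * (x * y) ^ 2) by ring]
  positivity

lemma Real.rpow_three_halves_lt_iff {u v : ℝ} (hu : 0 ≤ u) (hv : 0 < v) :
    u ^ (3 / 2 : ℝ) < v ↔ u ^ 3 < v ^ 2 := by
  rw [show (3 / 2 : ℝ) = (3 : ℕ) * (1 / 2) by norm_num, Real.rpow_natCast_mul hu,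
    ← Real.sqrt_eq_rpow, Real.sqrt_lt' hv]

lemma Real.pow_six_rpow_two_thirds {x : ℝ} (hx : 0 ≤ x) : (x ^ 6) ^ (2 / 3 : ℝ) = x ^ 4 := by
  rw [← Real.rpow_natCast_mul hx]
  norm_num

lemma Real.exists_pos_pow_six_eq {a : ℝ} (ha : 0 < a) : ∃ x : ℝ, 0 < x ∧ x ^ 6 = a :=
  ⟨a ^ ((6 : ℕ)⁻¹ : ℝ), by positivity, Real.rpow_inv_natCast_pow ha.le (by norm_num)⟩

theorem power_mean_two_thirds_lt_general (a b : ℝ) (ha : 0 < a) (hb : 0 < b) :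
    ((a ^ (2 / 3 : ℝ) + b ^ (2 / 3 : ℝ)) / 2) ^ (3 / 2 : ℝ) <
      (3 / (2 * Real.sqrt 2)) * ((a + b + Real.sqrt (a * b)) / 3) := by
  obtain ⟨x, hx, rfl⟩ := Real.exists_pos_pow_six_eq ha
  obtain ⟨y, hy, rfl⟩ := Real.exists_pos_pow_six_eq hb
  have hsqrt : Real.sqrt (x ^ 6 * y ^ 6) = x ^ 3 * y ^ 3 := by
    rw [show x ^ 6 * y ^ 6 = (x ^ 3 * y ^ 3) ^ 2 by ring, Real.sqrt_sq (by positivity)]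
  have hrhs : (3 / (2 * Real.sqrt 2) * ((x ^ 6 + y ^ 6 + x ^ 3 * y ^ 3) / 3)) ^ 2 =
      (x ^ 6 + x ^ 3 * y ^ 3 + y ^ 6) ^ 2 / 8 := by
    field_simp
    rw [Real.sq_sqrt zero_le_two]
    ring
  rw [Real.pow_six_rpow_two_thirds hx.le, Real.pow_six_rpow_two_thirds hy.le, hsqrt,
    Real.rpow_three_halves_lt_iff (by positivity) (by positivity), hrhs]
  have := cube_add_pow_four_lt_sq x y (mul_pos hx hy)
  linarith

theorem power_mean_two_thirds_lt (a b : ℝ) (ha : 0 < a) (hb : 0 < b) (hab : a ≠ b) :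
    ((a ^ (2 / 3 : ℝ) + b ^ (2 / 3 : ℝ)) / 2) ^ (3 / 2 : ℝ) <
      (3 / (2 * Real.sqrt 2)) * ((a + b + Real.sqrt (a * b)) / 3) :=
  power_mean_two_thirds_lt_general a b ha hb
end

section
/- Let a and b be distinct positive real numbers. Then A_2(a,b) < S(a,b) < √2 · A_2(a,b), where A_2(a,b) = ((a² + b²)/2)^(1/2) is the power mean of order 2 and S(a,b) = (a^a · b^b)^(1/(a+b)). -/
open Real Set

/-
With `s = (a + b) / 2` and `t = (a - b) / (a + b)`, so that `a = s (1 + t)` and `b = s (1 - t)`,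
taking logarithms turns the lower bound into
`log (1 + t²) < (1 + t) log (1 + t) + (1 - t) log (1 - t)` for `0 < t < 1`. Both sides vanish at
`t = 0`, and the derivative of the difference, `log (1 + t) - log (1 - t) - 2t / (1 + t²)`, is
positive because the series of `log (1 + t) - log (1 - t)` starts with `2t`. The upper bound holds
because `S(a, b)` is the geometric mean of `a` and `b` with weights `a / (a + b)` and `b / (a + b)`,
hence at most their arithmetic mean `(a² + b²) / (a + b)`, which is below `√(a² + b²)`.
-/

lemma two_mul_le_log_one_add_sub_log_one_sub {t : ℝ} (h0 : 0 ≤ t) (h1 : t < 1) :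
    2 * t ≤ log (1 + t) - log (1 - t) := by
  have hsum := hasSum_log_sub_log_of_abs_lt_one (abs_lt.2 ⟨by linarith, h1⟩)
  simpa using le_hasSum hsum 0 fun k _ => by positivity

lemma log_one_add_sq_lt {t : ℝ} (h0 : 0 < t) (h1 : t < 1) :
    log (1 + t ^ 2) < (1 + t) * log (1 + t) + (1 - t) * log (1 - t) := by
  have hderiv : ∀ x ∈ Icc 0 t, HasDerivAt
      (fun x => (1 + x) * log (1 + x) + (1 - x) * log (1 - x) - log (1 + x ^ 2))
      (log (1 + x) - log (1 - x) - 2 * x / (1 + x ^ 2)) x := by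
    intro x ⟨hx0, hxt⟩
    have d1 := (hasDerivAt_mul_log (x := 1 + x) (by linarith)).comp x
      ((hasDerivAt_id x).const_add 1)
    have d2 := (hasDerivAt_mul_log (x := 1 - x) (by linarith)).comp x
      ((hasDerivAt_id x).const_sub 1)
    have d3 := ((hasDerivAt_pow 2 x).const_add 1).log (by positivity)
    refine ((d1.add d2).sub d3).congr_deriv ?_
    norm_num
    ring
  have hmono := strictMonoOn_of_hasDerivWithinAt_pos (convex_Icc 0 t)
    (fun x hx => (hderiv x hx).continuousAt.continuousWithinAt)
    (fun x hx => (hderiv x (interior_subset hx)).hasDerivWithinAt) fun x hx => by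
      rw [interior_Icc] at hx
      have hfrac : 2 * x / (1 + x ^ 2) < 2 * x :=
        div_lt_self (by linarith [hx.1]) (by nlinarith [hx.1])
      linarith [two_mul_le_log_one_add_sub_log_one_sub hx.1.le (hx.2.trans h1)]
  simpa using hmono (left_mem_Icc.2 h0.le) (right_mem_Icc.2 h0.le) h0

lemma add_div_two_mul_log_lt_mul_log_add_mul_log {a b : ℝ} (ha : 0 < a) (hb : 0 < b) (hab : a ≠ b) :
    (a + b) / 2 * log ((a ^ 2 + b ^ 2) / 2) < a * log a + b * log b := by
  wlog hba : b < a generalizing a b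
  · have := this hb ha hab.symm (hab.lt_or_gt.resolve_right hba)
    rwa [add_comm b, add_comm (b ^ 2), add_comm (b * _)] at this
  set s := (a + b) / 2
  set t := (a - b) / (a + b)
  have hs : 0 < s := by positivity
  have ht0 : 0 < t := div_pos (by linarith) (by linarith)
  have ht1 : t < 1 := (div_lt_one (by linarith)).2 (by linarith)
  have ha' : a = s * (1 + t) := by simp only [s, t]; field_simp; ring
  have hb' : b = s * (1 - t) := by simp only [s, t]; field_simp; ring
  have hq : (a ^ 2 + b ^ 2) / 2 = s ^ 2 * (1 + t ^ 2) := by rw [ha', hb']; ring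
  rw [hq, log_mul (by positivity) (by positivity), log_pow, ha', hb',
    log_mul hs.ne' (by linarith), log_mul hs.ne' (by linarith)]
  push_cast
  linarith [mul_lt_mul_of_pos_left (log_one_add_sq_lt ht0 ht1) hs]

lemma rpow_self_mul_rpow_self_rpow_le {a b : ℝ} (ha : 0 < a) (hb : 0 < b) :
    (a ^ a * b ^ b) ^ (1 / (a + b)) ≤ (a ^ 2 + b ^ 2) / (a + b) := by
  have hab : 0 < a + b := by positivity
  rw [mul_rpow (by positivity) (by positivity), ← rpow_mul ha.le, ← rpow_mul hb.le]
  calc a ^ (a * (1 / (a + b))) * b ^ (b * (1 / (a + b)))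
      ≤ a * (1 / (a + b)) * a + b * (1 / (a + b)) * b :=
        geom_mean_le_arith_mean2_weighted (by positivity) (by positivity) ha.le hb.le
          (by field_simp)
    _ = (a ^ 2 + b ^ 2) / (a + b) := by field_simp

lemma sq_add_sq_div_add_lt_sqrt {a b : ℝ} (ha : 0 < a) (hb : 0 < b) :
    (a ^ 2 + b ^ 2) / (a + b) < √(a ^ 2 + b ^ 2) := by
  have hq : 0 < a ^ 2 + b ^ 2 := by positivity
  have hsqrt : √(a ^ 2 + b ^ 2) < a + b :=
    (sqrt_lt' (by positivity)).2 (by nlinarith [mul_pos ha hb])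
  rw [div_lt_iff₀ (by positivity)]
  calc a ^ 2 + b ^ 2 = √(a ^ 2 + b ^ 2) * √(a ^ 2 + b ^ 2) := (mul_self_sqrt hq.le).symm
    _ < √(a ^ 2 + b ^ 2) * (a + b) := mul_lt_mul_of_pos_left hsqrt (sqrt_pos.2 hq)

theorem A2_lt_S_lt (a b : ℝ) (ha : 0 < a) (hb : 0 < b) (hab : a ≠ b) :
    ((a ^ 2 + b ^ 2) / 2) ^ ((1 : ℝ) / 2) < (a ^ a * b ^ b) ^ (1 / (a + b)) ∧
      (a ^ a * b ^ b) ^ (1 / (a + b)) <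
        Real.sqrt 2 * ((a ^ 2 + b ^ 2) / 2) ^ ((1 : ℝ) / 2) := by
  constructor
  · rw [← log_lt_log_iff (by positivity) (by positivity), log_rpow (by positivity),
      log_rpow (by positivity), log_mul (by positivity) (by positivity), log_rpow ha,
      log_rpow hb, one_div (a + b), inv_mul_eq_div, lt_div_iff₀ (by positivity)]
    linarith [add_div_two_mul_log_lt_mul_log_add_mul_log ha hb hab]
  · calc (a ^ a * b ^ b) ^ (1 / (a + b)) ≤ (a ^ 2 + b ^ 2) / (a + b) :=
          rpow_self_mul_rpow_self_rpow_le ha hb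
      _ < √(a ^ 2 + b ^ 2) := sq_add_sq_div_add_lt_sqrt ha hb
      _ = √2 * ((a ^ 2 + b ^ 2) / 2) ^ ((1 : ℝ) / 2) := by
          rw [← sqrt_eq_rpow, ← sqrt_mul zero_le_two]
          ring_nf
end
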